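/- arXiv:1509.03227 — 2 statements merged into one kernel-verified Lean document; each statement's English description precedes it below -/
import Mathlib

section
/- A Bézier curve x(t) = ∑_{k=0}^n B_n^k(t) x_k with x_0 = 0, x_n = 1, and strictly increasing control abscissas defines a bijection from [0,1] onto [0,1]. -/
noncomputable def bern (n k : ℕ) (t : ℝ) : ℝ :=
  (n.choose k : ℝ) * t ^ k * (1 - t) ^ (n - k)

open Polynomial
theorem bezier_bijOn (n : ℕ) (x : ℕ → ℝ) (h0 : x 0 = 0) (h1 : x n = 1)
    (hx : ∀ k < n, x k < x (k + 1)) :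
    Set.BijOn (fun t => ∑ k ∈ Finset.range (n + 1), bern n k t * x k)
      (Set.Icc (0:ℝ) 1) (Set.Icc (0:ℝ) 1) := by
  have hn : 0 < n := by
    rcases Nat.eq_zero_or_pos n with h | h
    · rw [h, h0] at h1; norm_num at h1
    · exact h
  set P : Polynomial ℝ := ∑ k ∈ Finset.range (n+1), x k • bernsteinPolynomial ℝ n k with hP
  set f : ℝ → ℝ := fun t => ∑ k ∈ Finset.range (n + 1), bern n k t * x k with hf
  have hfP : f = fun t => P.eval t := by
    funext t
    rw [hf, hP]
    simp only [Polynomial.eval_finset_sum, Polynomial.eval_smul]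
    refine Finset.sum_congr rfl fun k _ => ?_
    simp [bern, bernsteinPolynomial]
    ring
  -- shifted-sum identity
  have hshift : ∑ k ∈ Finset.range n, x (k+1) • bernsteinPolynomial ℝ (n-1) (k+1)
      = ∑ k ∈ Finset.range n, x k • bernsteinPolynomial ℝ (n-1) k := by
    have e1 := Finset.sum_range_succ' (fun k => x k • bernsteinPolynomial ℝ (n-1) k) n
    have e2 := Finset.sum_range_succ (fun k => x k • bernsteinPolynomial ℝ (n-1) k) n
    rw [h0, bernsteinPolynomial.eq_zero_of_lt ℝ (by omega : n - 1 < n)] at *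
    simp only [zero_smul, smul_zero, add_zero] at e1 e2
    rw [← e1, e2]
  have hcast : ∀ p : ℝ[X], (n : ℝ[X]) * p = (n : ℝ) • p := fun p => by
    rw [← Polynomial.C_eq_natCast, ← Polynomial.smul_eq_C_mul]
  have hD : P.derivative = (n : ℝ) • ∑ k ∈ Finset.range n,
      (x (k+1) - x k) • bernsteinPolynomial ℝ (n-1) k := by
    rw [hP, Polynomial.derivative_sum, Finset.sum_range_succ']
    simp only [Polynomial.derivative_smul, bernsteinPolynomial.derivative_succ,
      bernsteinPolynomial.derivative_zero, h0, zero_smul, smul_zero,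
      Polynomial.derivative_zero, add_zero]
    simp only [hcast, mul_sub, smul_sub, sub_smul, Finset.smul_sum, Finset.sum_sub_distrib,
      smul_comm (_ : ℝ) ((n : ℝ))]
    congr 1
    rw [← Finset.smul_sum, ← Finset.smul_sum, hshift]
  have hcont : Continuous f := by rw [hfP]; exact P.continuous
  have hderiv : ∀ t : ℝ, HasDerivAt f (P.derivative.eval t) t := by
    rw [hfP]; exact fun t => P.hasDerivAt t
  have hpos : ∀ t ∈ Set.Ioo (0:ℝ) 1, 0 < P.derivative.eval t := by
    intro t ht
    rw [hD]
    simp only [Polynomial.eval_smul, Polynomial.eval_finset_sum, smul_eq_mul]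
    apply mul_pos (by exact_mod_cast hn)
    apply Finset.sum_pos
    · intro k hk
      rw [Finset.mem_range] at hk
      apply mul_pos (sub_pos.2 (hx k hk))
      have hch : 0 < (n-1).choose k := Nat.choose_pos (by omega)
      simp only [bernsteinPolynomial, Polynomial.eval_mul, Polynomial.eval_pow,
        Polynomial.eval_natCast, Polynomial.eval_X, Polynomial.eval_sub, Polynomial.eval_one]
      have h1t : 0 < 1 - t := by linarith [ht.2]
      have h0t := ht.1
      positivity
    · exact ⟨0, Finset.mem_range.2 hn⟩
  have hsm : StrictMonoOn f (Set.Icc 0 1) := by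
    apply strictMonoOn_of_deriv_pos (convex_Icc 0 1) hcont.continuousOn
    intro t ht
    rw [interior_Icc] at ht
    rw [(hderiv t).deriv]
    exact hpos t ht
  have hf0 : f 0 = 0 := by
    rw [hf]
    refine Finset.sum_eq_zero fun k _ => ?_
    match k with
    | 0 => simp [h0]
    | (k+1) => simp [bern]
  have hf1 : f 1 = 1 := by
    show (∑ k ∈ Finset.range (n+1), bern n k 1 * x k) = 1
    rw [Finset.sum_eq_single n]
    · simp [bern, h1]
    · intro k hk hkn
      rw [Finset.mem_range] at hk
      have : n - k ≠ 0 := by omega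
      simp [bern, zero_pow this]
    · intro h; exact absurd (Finset.self_mem_range_succ n) h
  have hm := hsm.monotoneOn
  refine ⟨fun t ht => ?_, hsm.injOn, fun y hy => ?_⟩
  · constructor
    · rw [← hf0]; exact hm (Set.left_mem_Icc.2 zero_le_one) ht ht.1
    · rw [← hf1]; exact hm ht (Set.right_mem_Icc.2 zero_le_one) ht.2
  · have := intermediate_value_Icc (zero_le_one (α := ℝ)) hcont.continuousOn
    rw [hf0, hf1] at this
    exact this hy
end

section
/- The matrix A with entries A_{ij} = C(n,i)·C(n,j) / ((2n+1)·C(2n,i+j)), 0 ≤ i,j ≤ n, is symmetric and positive definite. -/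
/-!
`A` is the Gram matrix of the Bernstein polynomials `B_{n,i} = C(n,i) tⁱ (1-t)ⁿ⁻ⁱ` in `L²(0,1)`:
`B_{n,i} B_{n,j} = C(n,i) C(n,j) t^(i+j) (1-t)^(2n-i-j)`, and the Beta integral
`∫₀¹ tᵃ (1-t)ᵇ dt = a! b! / (a+b+1)!` turns its integral into `A i j`. A Gram matrix is symmetric,
and it is positive definite because the Bernstein polynomials are linearly independent and a
nonzero polynomial cannot vanish almost everywhere on `[0,1]`.
-/

open Polynomial MeasureTheory
open scoped unitInterval Nat

theorem Polynomial.linearIndependent_map_algebraMap {K L ι : Type*} [Field K] [Field L]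
    [Algebra K L] {p : ι → K[X]} {N : ℕ} (hp : LinearIndependent K p)
    (hdeg : ∀ i, p i ∈ degreeLT K N) :
    LinearIndependent L fun i => (p i).map (algebraMap K L) := by
  have hK : LinearIndependent K ((LinearMap.pi fun k : Fin N => lcoeff K k) ∘ p) := by
    refine hp.map (Submodule.disjoint_def.2 fun q hq hker => ?_)
    have hq : q ∈ degreeLT K N := Submodule.span_le.2 (Set.range_subset_iff.2 hdeg) hq
    exact (degreeLTEquiv_eq_zero_iff_eq_zero hq).1 hker
  rw [← linearIndependent_algebraMap_comp_iff (S := L)] at hK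
  refine LinearIndependent.of_comp (LinearMap.pi fun k : Fin N => lcoeff L k) ?_
  have hcoeff : (LinearMap.pi fun k : Fin N => lcoeff L k) ∘ (fun i => (p i).map (algebraMap K L))
      = fun i => algebraMap K L ∘ ((LinearMap.pi fun k : Fin N => lcoeff K k) ∘ p) i := by
    ext i k
    simp
  exact hcoeff ▸ hK

theorem Polynomial.toContinuousMapOnAlgHom_injective {R : Type*} [CommRing R] [IsDomain R]
    [TopologicalSpace R] [IsTopologicalSemiring R] {s : Set R} (hs : s.Infinite) :
    Function.Injective (toContinuousMapOnAlgHom s) := by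
  refine (injective_iff_map_eq_zero _).2 fun p hp => p.eq_zero_of_infinite_isRoot (hs.mono ?_)
  intro x hx
  simpa using DFunLike.congr_fun hp ⟨x, hx⟩

theorem bernsteinPolynomial.mem_degreeLT (R : Type*) [CommRing R] (n ν : ℕ) :
    bernsteinPolynomial R n ν ∈ degreeLT R (n + 1) := by
  obtain hν | hν := le_or_gt ν n
  · refine Polynomial.mem_degreeLT.2 ((degree_le_of_natDegree_le (?_ : _ ≤ n)).trans_lt
      (by exact_mod_cast n.lt_succ_self))
    unfold bernsteinPolynomial
    compute_degree
    omega
  · simp [bernsteinPolynomial.eq_zero_of_lt R hν]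

theorem linearIndependent_bernstein (n : ℕ) :
    LinearIndependent ℝ fun ν : Fin (n + 1) => bernstein n ν := by
  -- `bernsteinPolynomial.linearIndependent` is stated over `ℚ` only.
  have hℝ : LinearIndependent ℝ fun ν : Fin (n + 1) => bernsteinPolynomial ℝ n ν := by
    simp_rw [← bernsteinPolynomial.map (algebraMap ℚ ℝ)]
    exact Polynomial.linearIndependent_map_algebraMap (bernsteinPolynomial.linearIndependent n)
      fun ν => bernsteinPolynomial.mem_degreeLT ℚ n ν
  exact hℝ.map' (toContinuousMapOnAlgHom I).toLinearMap
    (LinearMap.ker_eq_bot.2 (toContinuousMapOnAlgHom_injective (Set.Icc_infinite zero_lt_one)))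

instance unitInterval.isOpenPosMeasure : (volume : Measure I).IsOpenPosMeasure where
  open_pos U hU hne := by
    obtain ⟨V, hV, rfl⟩ := isOpen_induced_iff.1 hU
    obtain ⟨x, hx⟩ := hne
    have hIoo : (Set.Ioo (0:ℝ) 1 ∩ V).Nonempty := by
      rw [← closure_inter_open_nonempty_iff hV, closure_Ioo zero_ne_one]
      exact ⟨x, x.2, hx⟩
    rw [unitInterval.volume_apply, Subtype.image_preimage_coe]
    exact ((isOpen_Ioo.inter hV).measure_ne_zero volume hIoo) ∘
      measure_mono_null (Set.inter_subset_inter_left _ Set.Ioo_subset_Icc_self)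

theorem unitInterval.integral_comp_coe {E : Type*} [NormedAddCommGroup E] [NormedSpace ℝ E]
    (f : ℝ → E) : ∫ x : I, f x = ∫ x in (0:ℝ)..1, f x := by
  rw [unitInterval.measurePreserving_coe.integral_comp unitInterval.measurableEmbedding_coe,
    intervalIntegral.integral_of_le zero_le_one, integral_Icc_eq_integral_Ioc]

theorem integral_pow_mul_one_sub_pow (a b : ℕ) :
    ∫ x in (0:ℝ)..1, x ^ a * (1 - x) ^ b = (a ! * b ! : ℝ) / (a + b + 1)! := by
  have hbeta := Complex.betaIntegral_eq_Gamma_mul_div (a + 1) (b + 1)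
    (by norm_cast; positivity) (by norm_cast; positivity)
  have hsum : (a + 1 + (b + 1) : ℂ) = ((a + b + 1 : ℕ) : ℂ) + 1 := by push_cast; ring
  rw [hsum, Complex.Gamma_nat_eq_factorial, Complex.Gamma_nat_eq_factorial,
    Complex.Gamma_nat_eq_factorial, Complex.betaIntegral] at hbeta
  simp only [add_sub_cancel_right, Complex.cpow_natCast] at hbeta
  apply Complex.ofReal_injective
  rw [← intervalIntegral.integral_ofReal]
  push_cast
  exact hbeta

theorem integral_bernstein_mul_bernstein {n i j : ℕ} (hi : i ≤ n) (hj : j ≤ n) :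
    ∫ x : I, bernstein n i x * bernstein n j x =
      (n.choose i * n.choose j : ℝ) / ((2 * n + 1) * (2 * n).choose (i + j)) := by
  have hij : i + j ≤ 2 * n := by omega
  have hprod : ∀ x : ℝ, (n.choose i * x ^ i * (1 - x) ^ (n - i)) *
      (n.choose j * x ^ j * (1 - x) ^ (n - j)) =
      (n.choose i * n.choose j : ℝ) * (x ^ (i + j) * (1 - x) ^ (2 * n - (i + j))) := by
    intro x
    rw [show 2 * n - (i + j) = (n - i) + (n - j) by omega]
    ring
  simp only [bernstein_apply, hprod, integral_const_mul]
  rw [unitInterval.integral_comp_coe fun x => x ^ (i + j) * (1 - x) ^ (2 * n - (i + j)),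
    integral_pow_mul_one_sub_pow, Nat.cast_choose ℝ hij,
    show i + j + (2 * n - (i + j)) + 1 = 2 * n + 1 by omega, Nat.factorial_succ]
  push_cast
  field_simp

theorem bernstein_gram_symm_posDef (n : ℕ) :
    let A : Matrix (Fin (n + 1)) (Fin (n + 1)) ℝ := fun i j =>
      ((n.choose i : ℝ) * (n.choose j : ℝ)) /
        ((2 * n + 1 : ℝ) * ((2 * n).choose (i + j : ℕ) : ℝ))
    A.IsSymm ∧ A.PosDef := by
  intro A
  let v : Fin (n + 1) → Lp ℝ 2 (volume : Measure I) :=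
    fun ν => ContinuousMap.toLp 2 volume ℝ (bernstein n ν)
  have hA : A = Matrix.gram ℝ v := by
    ext i j
    rw [Matrix.gram_apply, ContinuousMap.inner_toLp]
    simp only [conj_trivial, mul_comm (bernstein n j _)]
    rw [integral_bernstein_mul_bernstein i.is_le j.is_le]
  have hv : LinearIndependent ℝ v :=
    (linearIndependent_bernstein n).map' _ (LinearMap.ker_eq_bot.2 (ContinuousMap.toLp_injective _))
  have hpos : A.PosDef := hA ▸ Matrix.posDef_gram_of_linearIndependent hv
  exact ⟨(Matrix.conjTranspose_eq_transpose_of_trivial A).symm.trans hpos.isHermitian, hpos⟩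
end
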